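/- arXiv:1302.6447 — 2 statements merged into one kernel-verified Lean document; each statement's English description precedes it below -/
import Mathlib

section
/- Let X be a Fréchet space, (p_n) a sequence of continuous seminorms on X, and M an infinite-dimensional subspace such that for every closed subspace E of finite codimension in X one has E ∩ M ⊄ ker p_1. Then for every ε > 0 and every finite family u_1, …, u_n ∈ X there exists u_{n+1} ∈ M with p_1(u_{n+1}) = 1 such that for all j ≤ n and all scalars a_1, …, a_{n+1}, p_j(∑_{k=1}^n a_k u_k) ≤ (1+ε) p_j(∑_{k=1}^{n+1} a_k u_k). -/
open Filter Topology

def Seminorm.kerSubmodule {𝕜 X : Type*} [NormedField 𝕜] [AddCommGroup X] [Module 𝕜 X]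
    (p : Seminorm 𝕜 X) : Submodule 𝕜 X where
  carrier := {x | p x = 0}
  zero_mem' := map_zero p
  add_mem' := by
    intro a b ha hb
    simp only [Set.mem_setOf_eq] at *
    exact le_antisymm (by simpa [ha, hb] using map_add_le_add p a b) (apply_nonneg p _)
  smul_mem' := by
    intro c x hx
    simp only [Set.mem_setOf_eq] at *
    simp [map_smul_eq_mul, hx]

/-!
The seminorms `p j`, `j < n`, restricted to the finite-dimensional span `V` of the `u k`, are
`(1 + ε)`-normed by finitely many linear functionals dominated by `p j`: on a finite-dimensional
space this follows from compactness of the unit sphere, and Hahn–Banach extends the functionals to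
`X`. They are continuous, so the intersection `E` of their kernels is closed of finite codimension,
and adding a vector of `E` to `x ∈ V` does not change their values; hence
`p j x ≤ (1 + ε) * p j (x + y)` for `x ∈ V`, `y ∈ E`. The hypothesis on `M` provides `v ∈ E ⊓ M`
with `p 0 v ≠ 0`, which we normalise.
-/

section

variable {𝕜 : Type*} [RCLike 𝕜]

theorem exists_finset_strongDual_norming {E : Type*} [NormedAddCommGroup E] [NormedSpace 𝕜 E]
    [FiniteDimensional 𝕜 E] {c : ℝ} (hc : 1 < c) :
    ∃ s : Finset (StrongDual 𝕜 E), (∀ g ∈ s, ‖g‖ ≤ 1) ∧ ∀ x, ∃ g ∈ s, ‖x‖ ≤ c * ‖g x‖ := by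
  classical
  have := FiniteDimensional.proper_rclike 𝕜 E
  choose g hg_norm hg_eq using fun x : E => exists_dual_vector'' 𝕜 x
  obtain ⟨t, -, ht⟩ := (isCompact_sphere (0 : E) 1).elim_nhds_subcover
    (fun x => {y | ‖y‖ < c * ‖g x y‖}) fun x hx => by
      refine (isOpen_lt continuous_norm (continuous_const.mul (g x).continuous.norm)).mem_nhds ?_
      rw [mem_sphere_zero_iff_norm] at hx
      simpa [hg_eq, hx] using hc
  refine ⟨insert 0 (t.image g), ?_, fun x => ?_⟩
  · simp only [Finset.mem_insert, Finset.mem_image]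
    rintro _ (rfl | ⟨x, -, rfl⟩)
    exacts [by simp, hg_norm x]
  obtain rfl | hx := eq_or_ne x 0
  · exact ⟨0, Finset.mem_insert_self _ _, by simp⟩
  have hx_pos : 0 < ‖x‖ := norm_pos_iff.2 hx
  obtain ⟨z, hzt, hz⟩ := Set.mem_iUnion₂.1 (ht (a := ((‖x‖⁻¹ : ℝ) : 𝕜) • x) (by
    simp [norm_smul, hx_pos.ne']))
  refine ⟨g z, Finset.mem_insert_of_mem (Finset.mem_image_of_mem g hzt), ?_⟩
  have hz' : ‖x‖⁻¹ * ‖x‖ < ‖x‖⁻¹ * (c * ‖g z x‖) := by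
    simpa [norm_smul, mul_left_comm c] using hz
  exact (lt_of_mul_lt_mul_left hz' (inv_nonneg.2 hx_pos.le)).le

theorem Seminorm.exists_finset_dual_norming {E : Type*} [AddCommGroup E] [Module 𝕜 E]
    [Module.Finite 𝕜 E] (q : Seminorm 𝕜 E) {c : ℝ} (hc : 1 < c) :
    ∃ s : Finset (Module.Dual 𝕜 E), (∀ f ∈ s, ∀ x, ‖f x‖ ≤ q x) ∧
      ∀ x, ∃ f ∈ s, q x ≤ c * ‖f x‖ := by
  classical
  let : SeminormedAddCommGroup E := q.toAddGroupSeminorm.toSeminormedAddCommGroup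
  let : NormedSpace 𝕜 E := ⟨fun a x => (map_smul_eq_mul q a x).le⟩
  obtain ⟨s, hs_norm, hs⟩ := exists_finset_strongDual_norming (𝕜 := 𝕜)
    (E := SeparationQuotient E) hc
  let lift : StrongDual 𝕜 (SeparationQuotient E) → Module.Dual 𝕜 E :=
    fun g => (g.comp (SeparationQuotient.mkCLM 𝕜 E)).toLinearMap
  refine ⟨s.image lift, ?_, fun x => ?_⟩
  · simp only [Finset.mem_image]
    rintro _ ⟨g, hg, rfl⟩ x
    exact (g.le_opNorm _).trans (mul_le_of_le_one_left (norm_nonneg _) (hs_norm g hg))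
  · obtain ⟨g, hg, hgx⟩ := hs (SeparationQuotient.mk x)
    exact ⟨lift g, Finset.mem_image_of_mem lift hg, hgx⟩

theorem Seminorm.exists_finset_dual_norming_on {X : Type*} [AddCommGroup X] [Module 𝕜 X]
    (q : Seminorm 𝕜 X) (V : Submodule 𝕜 X) [Module.Finite 𝕜 V] {c : ℝ} (hc : 1 < c) :
    ∃ s : Finset (Module.Dual 𝕜 X), (∀ f ∈ s, ∀ x, ‖f x‖ ≤ q x) ∧
      ∀ x ∈ V, ∃ f ∈ s, q x ≤ c * ‖f x‖ := by
  classical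
  obtain ⟨s, hs_le, hs⟩ := (q.comp V.subtype).exists_finset_dual_norming hc
  choose! ext hext_eq hext_le using fun f (hf : f ∈ s) =>
    Module.Dual.exists_extension_of_le_seminorm V f (hs_le f hf)
  refine ⟨s.image ext, ?_, fun x hx => ?_⟩
  · simp only [Finset.mem_image]
    rintro _ ⟨f, hf, rfl⟩
    exact hext_le f hf
  · obtain ⟨f, hf, hfx⟩ := hs ⟨x, hx⟩
    refine ⟨ext f, Finset.mem_image_of_mem ext hf, ?_⟩
    rw [show x = ((⟨x, hx⟩ : V) : X) from rfl, hext_eq f hf]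
    exact hfx

theorem LinearMap.continuous_of_norm_le_seminorm {X : Type*} [AddCommGroup X] [Module 𝕜 X]
    [TopologicalSpace X] [IsTopologicalAddGroup X] {q : Seminorm 𝕜 X} (hq : Continuous q)
    (f : X →ₗ[𝕜] 𝕜) (hf : ∀ x, ‖f x‖ ≤ q x) : Continuous f :=
  continuous_of_continuousAt_zero f <| by
    rw [ContinuousAt, map_zero]
    exact squeeze_zero_norm hf (by simpa using hq.tendsto 0)

theorem exists_isClosed_finite_quotient_forall_le_mul_add {ι X : Type*} [Finite ι]
    [AddCommGroup X] [Module 𝕜 X] [TopologicalSpace X] [IsTopologicalAddGroup X]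
    (q : ι → Seminorm 𝕜 X) (hq : ∀ i, Continuous (q i)) (V : Submodule 𝕜 X)
    [Module.Finite 𝕜 V] {c : ℝ} (hc : 1 < c) :
    ∃ E : Submodule 𝕜 X, IsClosed (E : Set X) ∧ Module.Finite 𝕜 (X ⧸ E) ∧
      ∀ i, ∀ x ∈ V, ∀ y ∈ E, q i x ≤ c * q i (x + y) := by
  choose s hs_le hs using fun i => (q i).exists_finset_dual_norming_on V hc
  let L : X →L[𝕜] ((Σ i, s i) → 𝕜) := ContinuousLinearMap.pi fun f =>
    ⟨f.2.1, (f.2.1).continuous_of_norm_le_seminorm (hq f.1) (hs_le f.1 _ f.2.2)⟩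
  refine ⟨L.ker, L.isClosed_ker, .equiv L.toLinearMap.quotKerEquivRange.symm,
    fun i x hx y hy => ?_⟩
  obtain ⟨f, hf, hfx⟩ := hs i x hx
  have hfy : f y = 0 := congr_fun hy ⟨i, f, hf⟩
  calc q i x ≤ c * ‖f x‖ := hfx
    _ = c * ‖f (x + y)‖ := by rw [map_add, hfy, add_zero]
    _ ≤ c * q i (x + y) := by gcongr; exact hs_le i f hf _

end

theorem exists_extension_basic_step_general {𝕜 X : Type*} [RCLike 𝕜]
    [AddCommGroup X] [Module 𝕜 X] [UniformSpace X] [IsUniformAddGroup X]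
    (p : ℕ → Seminorm 𝕜 X) (hpc : ∀ n, Continuous (p n))
    (M : Submodule 𝕜 X)
    (hM : ∀ E : Submodule 𝕜 X, IsClosed (E : Set X) → Module.Finite 𝕜 (X ⧸ E) →
      ¬ (E ⊓ M ≤ (p 0).kerSubmodule)) :
    ∀ ε > (0 : ℝ), ∀ (n : ℕ) (u : Fin n → X), ∃ v ∈ M, p 0 v = 1 ∧
      ∀ j < n, ∀ a : Fin (n + 1) → 𝕜,
        p j (∑ k : Fin n, a k.castSucc • u k) ≤
          (1 + ε) * p j (∑ k : Fin (n + 1), a k • (Fin.snoc u v : Fin (n + 1) → X) k) := by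
  intro ε hε n u
  let V := Submodule.span 𝕜 (Set.range u)
  have : Module.Finite 𝕜 V := Module.Finite.span_of_finite 𝕜 (Set.finite_range u)
  obtain ⟨E, hE_closed, hE_finite, hE⟩ := exists_isClosed_finite_quotient_forall_le_mul_add
    (fun j : Fin n => p j) (fun j => hpc j) V (c := 1 + ε) (by linarith)
  obtain ⟨w, ⟨hwE, hwM⟩, hw⟩ := SetLike.not_le_iff_exists.1 (hM E hE_closed hE_finite)
  have hw_ne : p 0 w ≠ 0 := hw
  let v := ((p 0 w)⁻¹ : 𝕜) • w
  refine ⟨v, M.smul_mem _ hwM, ?_, fun j hj a => ?_⟩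
  · simp [v, map_smul_eq_mul, abs_of_nonneg (apply_nonneg (p 0) w), hw_ne]
  rw [Fin.sum_univ_castSucc, Fin.snoc_last]
  simp only [Fin.snoc_castSucc]
  exact hE ⟨j, hj⟩ _ (Submodule.sum_mem _ fun k _ => V.smul_mem _ (Submodule.subset_span ⟨k, rfl⟩))
    _ (E.smul_mem _ (E.smul_mem _ hwE))

/-- Corollary: in a Fréchet space, given continuous seminorms `p n` and an
infinite-dimensional subspace `M` such that `E ⊓ M ⊄ ker p₀` for every closed subspace `E`
of finite codimension, one may extend any finite family by a vector of `M` of `p₀`-norm one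
while controlling the seminorms of linear combinations. (Indices are 0-based, so `p 0`
plays the role of `p₁`.) -/
theorem exists_extension_basic_step {𝕜 X : Type*} [RCLike 𝕜]
    [AddCommGroup X] [Module 𝕜 X] [UniformSpace X] [IsUniformAddGroup X]
    [ContinuousSMul 𝕜 X] [CompleteSpace X] [T2Space X]
    (pfam : ℕ → Seminorm 𝕜 X) (hpfam : WithSeminorms pfam)
    (p : ℕ → Seminorm 𝕜 X) (hpc : ∀ n, Continuous (p n))
    (M : Submodule 𝕜 X) (hMinf : ¬ Module.Finite 𝕜 M)
    (hM : ∀ E : Submodule 𝕜 X, IsClosed (E : Set X) → Module.Finite 𝕜 (X ⧸ E) →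
      ¬ (E ⊓ M ≤ (p 0).kerSubmodule)) :
    ∀ ε > (0 : ℝ), ∀ (n : ℕ) (u : Fin n → X), ∃ v ∈ M, p 0 v = 1 ∧
      ∀ j < n, ∀ a : Fin (n + 1) → 𝕜,
        p j (∑ k : Fin n, a k.castSucc • u k) ≤
          (1 + ε) * p j (∑ k : Fin (n + 1), a k • (Fin.snoc u v : Fin (n + 1) → X) k) :=
  exists_extension_basic_step_general p hpc M hM
end

section
/- Let X be a Fréchet space with increasing seminorms (p_n), each of whose kernels has finite codimension in X, Y a separable topological vector space with seminorms (q_j), and (T_n) continuous linear operators from X to Y. If there exist an increasing sequence (n_k) and X_0 ⊂ X such that (1) for every j and every x ∈ X_0, (q_j(T_{n_k} x))_k is ultimately zero, and (2) for every K ≥ 1, ⋃_{k≥K} T_{n_k}(X_0) is dense in Y, then (T_n) possesses a hypercyclic subspace. -/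
/-!
If every `q i` vanishes, every orbit is dense and `X` itself works. Otherwise fix `y₀` with
`q i₀ y₀ ≠ 0`. Since `ker p N` has finite codimension, a vector of `X₀` can be corrected by a
combination of finitely many others (which late `T (nk k)` kill) so as to lie in `ker p N` while
still approximating any target under some late `T (nk k)` and being eventually killed by every
`q i ∘ T (nk k)`. Inductively choose vectors `v s ∈ ker p N`, with `N` beyond every index used
before, and times `k s`, indexed by `s = ⟨j, b⟩`, such that `T (nk (k s)) (v s)` approximates the
target of stage `s` in `q (s + i₀)` while `q (s + i₀) ∘ T (nk (k s))` kills every other `v t`.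
The column sums `x j = ∑ b, v ⟨j, b⟩` converge, admit continuous functionals `ℓ j` with
`ℓ j (x j) = 1` and `ℓ j (x m) = 0` for `m > j`, and the closed span `M` of the `x j` is
infinite-dimensional. A nonzero `z ∈ M` is `a • x j + w` with `a ≠ 0` and `w` in the closed span
of the later columns, which all stages of column `j` kill; these stages aim at every point of a
dense sequence with arbitrarily small error, so the orbit of `z` is dense.
-/

open Filter Topology

namespace Seminorm

variable {𝕜 E : Type*} [NormedField 𝕜] [AddCommGroup E] [Module 𝕜 E]

@[simp]
theorem mem_kerSubmodule {p : Seminorm 𝕜 E} {x : E} : x ∈ p.kerSubmodule ↔ p x = 0 := Iff.rfl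

theorem isClosed_kerSubmodule [TopologicalSpace E] {p : Seminorm 𝕜 E} (hp : Continuous p) :
    IsClosed (p.kerSubmodule : Set E) :=
  isClosed_eq hp continuous_const

theorem finset_sup_le_of_monotone {p : ℕ → Seminorm 𝕜 E} (hp : Monotone p) (s : Finset ℕ) :
    s.sup p ≤ p (s.sup id) :=
  Finset.sup_le fun _ hi => hp (Finset.le_sup (f := id) hi)

theorem eq_zero_of_le_of_eq_zero {p q : Seminorm 𝕜 E} (h : p ≤ q) {x : E} (hx : q x = 0) :
    p x = 0 :=
  le_antisymm ((h x).trans hx.le) (apply_nonneg p x)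

end Seminorm

namespace WithSeminorms

variable {𝕜 E : Type*} [NormedField 𝕜] [AddCommGroup E] [Module 𝕜 E] [TopologicalSpace E]
  {p : ℕ → Seminorm 𝕜 E}

theorem hasBasis_ball_of_monotone (hp : WithSeminorms p) (hpm : Monotone p) (x : E) :
    (𝓝 x).HasBasis (fun nr : ℕ × ℝ => 0 < nr.2) fun nr => (p nr.1).ball x nr.2 := by
  refine hp.hasBasis_ball.to_hasBasis (fun sr hr => ⟨(sr.1.sup id, sr.2), hr, ?_⟩)
    fun nr hr => ⟨({nr.1}, nr.2), hr, by simp⟩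
  exact Seminorm.ball_antitone (Seminorm.finset_sup_le_of_monotone hpm sr.1)

theorem dense_iff_of_monotone (hp : WithSeminorms p) (hpm : Monotone p) {s : Set E} :
    Dense s ↔ ∀ x n, ∀ ε > 0, ∃ y ∈ s, p n (y - x) < ε := by
  simp only [Dense, mem_closure_iff_nhds_basis (hp.hasBasis_ball_of_monotone hpm _), Prod.forall,
    Seminorm.mem_ball]

end WithSeminorms

theorem WithSeminorms.exists_eq_zero_of_continuous {𝕜 E : Type*} [NontriviallyNormedField 𝕜]
    [AddCommGroup E] [Module 𝕜 E] [TopologicalSpace E] {p : ℕ → Seminorm 𝕜 E}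
    (hp : WithSeminorms p) (hpm : Monotone p)
    {g : Seminorm 𝕜 E} (hg : Continuous g) : ∃ n, ∀ x, p n x = 0 → g x = 0 := by
  obtain ⟨s, C, -, hle⟩ := Seminorm.bound_of_continuous hp g hg
  refine ⟨s.sup id, fun x hx => Seminorm.eq_zero_of_le_of_eq_zero hle ?_⟩
  simp [Seminorm.eq_zero_of_le_of_eq_zero (Seminorm.finset_sup_le_of_monotone hpm s) hx]

theorem WithSeminorms.summable_of_apply_eq_zero {𝕜 E : Type*} [NormedField 𝕜] [AddCommGroup E]
    [Module 𝕜 E] [UniformSpace E] [IsUniformAddGroup E] [CompleteSpace E] {p : ℕ → Seminorm 𝕜 E}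
    (hp : WithSeminorms p) (hpm : Monotone p) {w : ℕ → E} (hw : ∀ n, p n (w n) = 0) :
    Summable w := by
  refine summable_iff_vanishing.2 fun e he => ?_
  obtain ⟨⟨n, ε⟩, hε, hball⟩ := (hp.hasBasis_ball_of_monotone hpm 0).mem_iff.1 he
  refine ⟨Finset.range n, fun t ht => hball ?_⟩
  have hsum : p n (∑ b ∈ t, w b) = 0 := Submodule.sum_mem (p n).kerSubmodule fun b hb =>
    Seminorm.eq_zero_of_le_of_eq_zero
      (hpm (not_lt.1 (Finset.disjoint_right.1 ht.symm hb ∘ Finset.mem_range.2))) (hw b)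
  rwa [Seminorm.mem_ball, sub_zero, hsum]

theorem exists_seq_of_history {α : Type*} (P : ∀ n, (∀ m < n, α) → α → Prop)
    (h : ∀ n g, ∃ a, P n g a) : ∃ f : ℕ → α, ∀ n, P n (fun m _ => f m) (f n) :=
  ⟨Nat.strongRec fun n g => (h n g).choose, fun n => by
    dsimp only; rw [Nat.strongRec_eq]; exact (h _ _).choose_spec⟩

section HasSum

variable {β E A : Type*} [AddCommGroup E] [TopologicalSpace E] [SetLike A E]
  [AddSubgroupClass A E] {f : β → E} {a : E} {s : A}

theorem HasSum.mem_of_isClosed (hf : HasSum f a) (hs : IsClosed (s : Set E))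
    (h : ∀ b, f b ∈ s) : a ∈ s :=
  hs.mem_of_tendsto hf (Eventually.of_forall fun _ => sum_mem fun b _ => h b)

theorem HasSum.sub_mem_of_forall_ne [IsTopologicalAddGroup E] (hf : HasSum f a)
    (hs : IsClosed (s : Set E)) (b₀ : β) (h : ∀ b ≠ b₀, f b ∈ s) : a - f b₀ ∈ s := by
  classical
  have := (hf.update b₀ 0).mem_of_isClosed hs fun b => ?_
  · rwa [zero_sub, neg_add_eq_sub] at this
  · rcases eq_or_ne b b₀ with rfl | hb
    · simp [zero_mem s]
    · simpa [hb] using h b hb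

end HasSum

theorem linearIndependent_of_triangular {𝕜 E : Type*} [Field 𝕜] [AddCommGroup E] [Module 𝕜 E]
    {x : ℕ → E} (ℓ : ℕ → E →ₗ[𝕜] 𝕜) (hself : ∀ n, ℓ n (x n) = 1)
    (hlt : ∀ n m, n < m → ℓ n (x m) = 0) : LinearIndependent 𝕜 x := by
  rw [linearIndependent_iff']
  intro s c hsum n
  induction n using Nat.strong_induction_on with
  | _ n ih =>
    intro hn
    have := congrArg (ℓ n) hsum
    rw [map_sum, map_zero, Finset.sum_eq_single_of_mem n hn fun m hm hmn => ?_] at this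
    · simpa [hself] using this
    · rcases hmn.lt_or_gt with h | h
      · simp [ih m h hm]
      · simp [hlt n m h]

def closedTailSpan (𝕜 : Type*) {E : Type*} [Semiring 𝕜] [AddCommMonoid E] [Module 𝕜 E]
    [TopologicalSpace E] [ContinuousAdd E] [ContinuousConstSMul 𝕜 E] (x : ℕ → E) (n : ℕ) :
    Submodule 𝕜 E :=
  (Submodule.span 𝕜 (x '' Set.Ici n)).topologicalClosure

section closedTailSpan

variable {𝕜 E : Type*} [Field 𝕜] [TopologicalSpace 𝕜] [AddCommGroup E] [Module 𝕜 E]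
  [TopologicalSpace E] [IsTopologicalAddGroup E] [ContinuousSMul 𝕜 E] {x : ℕ → E} {n : ℕ}

theorem mem_closedTailSpan {i : ℕ} (h : n ≤ i) : x i ∈ closedTailSpan 𝕜 x n :=
  Submodule.le_topologicalClosure _ (Submodule.subset_span ⟨i, h, rfl⟩)

theorem closedTailSpan_le {s : Submodule 𝕜 E} (hs : IsClosed (s : Set E))
    (h : ∀ i, n ≤ i → x i ∈ s) : closedTailSpan 𝕜 x n ≤ s :=
  Submodule.topologicalClosure_minimal _
    (Submodule.span_le.2 <| by rintro _ ⟨i, hi, rfl⟩; exact h i hi) hs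

theorem sub_smul_mem_closedTailSpan_succ (ℓ : E →L[𝕜] 𝕜) (hself : ℓ (x n) = 1)
    (hlt : ∀ i, n < i → ℓ (x i) = 0) {z : E} (hz : z ∈ closedTailSpan 𝕜 x n) :
    z - ℓ z • x n ∈ closedTailSpan 𝕜 x (n + 1) := by
  set φ : E →L[𝕜] E := ContinuousLinearMap.id 𝕜 E - ℓ.smulRight (x n)
  have hφ : Submodule.map (φ : E →ₗ[𝕜] E) (Submodule.span 𝕜 (x '' Set.Ici n)) ≤
      Submodule.span 𝕜 (x '' Set.Ici (n + 1)) := by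
    rw [Submodule.map_span, Submodule.span_le]
    rintro _ ⟨_, ⟨i, hi, rfl⟩, rfl⟩
    rcases (Set.mem_Ici.1 hi).eq_or_lt with rfl | hi
    · simp [φ, hself]
    · simpa [φ, hlt i hi] using
        Submodule.subset_span (Set.mem_image_of_mem x (show i ∈ Set.Ici (n + 1) from hi))
  exact Submodule.topologicalClosure_mono hφ
    (Submodule.topologicalClosure_map φ _ (Submodule.mem_map_of_mem hz))

theorem exists_eq_smul_add_of_mem_closedTailSpan (ℓ : ℕ → E →L[𝕜] 𝕜)
    (hself : ∀ n, ℓ n (x n) = 1) (hlt : ∀ n m, n < m → ℓ n (x m) = 0)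
    {z : E} (hz : z ∈ closedTailSpan 𝕜 x 0) (hsep : ∃ n, z ∉ closedTailSpan 𝕜 x n) :
    ∃ n, ∃ a ≠ (0 : 𝕜), ∃ w ∈ closedTailSpan 𝕜 x (n + 1), z = a • x n + w := by
  by_contra! hno
  obtain ⟨n, hn⟩ := hsep
  refine hn (Nat.rec hz (fun m hm => ?_) n)
  have hpeel := sub_smul_mem_closedTailSpan_succ (ℓ m) (hself m) (hlt m) hm
  by_cases ha : ℓ m z = 0
  · simpa [ha] using hpeel
  · exact absurd (by abel) (hno m _ ha _ hpeel)

end closedTailSpan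

theorem WithSeminorms.dense_range_smul_add {𝕜 X Y F : Type*} [NormedField 𝕜] [AddCommGroup X]
    [Module 𝕜 X] [AddCommGroup Y] [Module 𝕜 Y] [TopologicalSpace Y] [FunLike F X Y]
    [LinearMapClass F 𝕜 X Y] {q : ℕ → Seminorm 𝕜 Y} (hq : WithSeminorms q) (hqm : Monotone q)
    {T : ℕ → F} {u : X} {W : Set X}
    (h : ∀ y i, ∀ ε > 0, ∃ n, q i (T n u - y) < ε ∧ ∀ w ∈ W, q i (T n w) = 0)
    {a : 𝕜} (ha : a ≠ 0) {w : X} (hw : w ∈ W) :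
    Dense (Set.range fun n => T n (a • u + w)) := by
  rw [hq.dense_iff_of_monotone hqm]
  intro y i ε hε
  have ha' : 0 < ‖a‖ := norm_pos_iff.2 ha
  obtain ⟨n, hn, hW⟩ := h (a⁻¹ • y) i (ε / ‖a‖) (div_pos hε ha')
  refine ⟨_, ⟨n, rfl⟩, ?_⟩
  calc q i (T n (a • u + w) - y) = q i (a • (T n u - a⁻¹ • y) + T n w) := by
        rw [map_add, map_smul, smul_sub, smul_inv_smul₀ ha]; congr 1; abel
    _ ≤ ‖a‖ * q i (T n u - a⁻¹ • y) + q i (T n w) :=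
        (map_add_le_add _ _ _).trans_eq (by rw [map_smul_eq_mul])
    _ < ε := by rw [hW w hw, add_zero, ← lt_div_iff₀' ha']; exact hn

theorem Seminorm.exists_continuousLinearMap_eq_one {𝕜 E : Type*} [NontriviallyNormedField 𝕜]
    [CompleteSpace 𝕜] [AddCommGroup E] [Module 𝕜 E] [TopologicalSpace E] [IsTopologicalAddGroup E]
    [ContinuousSMul 𝕜 E] {p : Seminorm 𝕜 E} (hp : Continuous p)
    [FiniteDimensional 𝕜 (E ⧸ p.kerSubmodule)] {v : E} (hv : p v ≠ 0) :
    ∃ ℓ : E →L[𝕜] 𝕜, ℓ v = 1 ∧ ∀ x, p x = 0 → ℓ x = 0 := by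
  have : IsClosed (p.kerSubmodule : Set E) := isClosed_kerSubmodule hp
  have hv' : p.kerSubmodule.mkQ v ≠ 0 := by
    simpa [Submodule.Quotient.mk_eq_zero] using hv
  obtain ⟨f, hf⟩ := Module.Projective.exists_dual_ne_zero 𝕜 hv'
  refine ⟨(f (p.kerSubmodule.mkQ v))⁻¹ • (LinearMap.toContinuousLinearMap f).comp
    p.kerSubmodule.mkQL, by simpa using inv_mul_cancel₀ hf, fun x hx => ?_⟩
  simp [(Submodule.Quotient.mk_eq_zero p.kerSubmodule (x := x)).2 hx]

section Approximation

variable {𝕜 X Y F : Type*} [NormedField 𝕜] [AddCommGroup X] [Module 𝕜 X] [AddCommGroup Y]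
  [Module 𝕜 Y] [FunLike F X Y] [LinearMapClass F 𝕜 X Y]

def eventuallyKerSubmodule (q : ℕ → Seminorm 𝕜 Y) (S : ℕ → F) : Submodule 𝕜 X where
  carrier := {x | ∀ i, ∀ᶠ k in atTop, q i (S k x) = 0}
  zero_mem' _ := Eventually.of_forall fun _ => by simp
  add_mem' ha hb i := ((ha i).and (hb i)).mono fun k h => by
    rw [map_add]; exact (q i).kerSubmodule.add_mem h.1 h.2
  smul_mem' c _ hx i := (hx i).mono fun k h => by rw [map_smul, map_smul_eq_mul, h, mul_zero]

@[simp]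
theorem mem_eventuallyKerSubmodule {q : ℕ → Seminorm 𝕜 Y} {S : ℕ → F} {x : X} :
    x ∈ eventuallyKerSubmodule q S ↔ ∀ i, ∀ᶠ k in atTop, q i (S k x) = 0 :=
  Iff.rfl

theorem span_le_eventuallyKerSubmodule {q : ℕ → Seminorm 𝕜 Y} {S : ℕ → F} {X₀ : Set X}
    (h : ∀ i, ∀ x ∈ X₀, ∀ᶠ k in atTop, q i (S k x) = 0) :
    Submodule.span 𝕜 X₀ ≤ eventuallyKerSubmodule q S :=
  Submodule.span_le.2 fun x hx => mem_eventuallyKerSubmodule.2 fun i => h i x hx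

theorem exists_approx_mem_eventuallyKerSubmodule [TopologicalSpace Y] {q : ℕ → Seminorm 𝕜 Y}
    (hq : WithSeminorms q) (hqm : Monotone q) {S : ℕ → F} {X₀ : Set X}
    (h₁ : ∀ i, ∀ x ∈ X₀, ∀ᶠ k in atTop, q i (S k x) = 0)
    (h₂ : ∀ K, Dense (⋃ k ≥ K, S k '' X₀)) (P : Seminorm 𝕜 X)
    [IsNoetherian 𝕜 (X ⧸ P.kerSubmodule)] (i : ℕ) (y : Y) {ε : ℝ} (hε : 0 < ε) (κ : ℕ) :
    ∃ k ≥ κ, ∃ v ∈ eventuallyKerSubmodule q S, P v = 0 ∧ q i (S k v - y) < ε := by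
  set π := P.kerSubmodule.mkQ
  obtain ⟨G, hGX₀, hGfin, hGspan⟩ : ∃ G ⊆ X₀, G.Finite ∧
      Submodule.span 𝕜 (π '' X₀) = Submodule.span 𝕜 (π '' G) := by
    obtain ⟨s, hs, hspan⟩ := (Submodule.fg_span_iff_fg_span_finset_subset _).1
      (IsNoetherian.noetherian (Submodule.span 𝕜 (π '' X₀)))
    exact Set.exists_subset_image_finite_and
      (p := fun t => Submodule.span 𝕜 (π '' X₀) = Submodule.span 𝕜 t) |>.1
      ⟨s, hs, s.finite_toSet, hspan⟩
  obtain ⟨κ', hκ'⟩ := eventually_atTop.1 <|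
    hGfin.eventually_all.2 fun g hg => h₁ i g (hGX₀ hg)
  obtain ⟨_, hmem, hu⟩ := (hq.dense_iff_of_monotone hqm).1 (h₂ (max κ κ')) y i ε hε
  simp only [Set.mem_iUnion, Set.mem_image] at hmem
  obtain ⟨k, hk, u, hu₀, rfl⟩ := hmem
  have hπu : π u ∈ Submodule.map π (Submodule.span 𝕜 G) := by
    rw [Submodule.map_span, ← hGspan]
    exact Submodule.subset_span (Set.mem_image_of_mem π hu₀)
  obtain ⟨g, hg, hgu⟩ := hπu
  have hG : ∀ g' ∈ G, g' ∈ Submodule.comap (S k : X →ₗ[𝕜] Y) (q i).kerSubmodule :=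
    fun g' hg' => hκ' k (le_of_max_le_right hk) g' hg'
  have hSg : q i (S k g) = 0 := Submodule.span_le.2 hG hg
  refine ⟨k, le_of_max_le_left hk, u - g, ?_, ?_, ?_⟩
  · exact sub_mem (span_le_eventuallyKerSubmodule h₁ (Submodule.subset_span hu₀))
      (span_le_eventuallyKerSubmodule h₁ (Submodule.span_mono hGX₀ hg))
  · exact (Submodule.Quotient.eq _).1 hgu.symm
  · calc q i (S k (u - g) - y) = q i ((S k u - y) - S k g) := by rw [map_sub (S k)]; congr 1; abel
      _ ≤ q i (S k u - y) + q i (S k g) := map_sub_le_add _ _ _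
      _ < ε := by rwa [hSg, add_zero]

end Approximation

/-- `v s` is put in the kernel of a seminorm `p N` controlling every earlier `q (lvl t) ∘ S (k t)`,
so later vectors never disturb earlier stages. -/
theorem exists_stage_seq {𝕜 X Y F : Type*} [NormedField 𝕜] [AddCommGroup X] [Module 𝕜 X]
    [AddCommGroup Y] [Module 𝕜 Y] [FunLike F X Y] [LinearMapClass F 𝕜 X Y]
    {p : ℕ → Seminorm 𝕜 X} (hpm : Monotone p) {q : ℕ → Seminorm 𝕜 Y} {S : ℕ → F}
    (hρ : ∀ i k, ∃ N, ∀ x, p N x = 0 → q i (S k x) = 0)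
    (happrox : ∀ N i y, ∀ ε > 0, ∀ κ, ∃ k ≥ κ, ∃ v ∈ eventuallyKerSubmodule q S,
      p N v = 0 ∧ q i (S k v - y) < ε)
    (lvl : ℕ → ℕ) (tgt : ℕ → Y) (η : ℕ → ℝ) (hη : ∀ s, 0 < η s) (r : X → ℕ) :
    ∃ (k : ℕ → ℕ) (v : ℕ → X), (∀ s, p s (v s) = 0) ∧
      (∀ s, q (lvl s) (S (k s) (v s) - tgt s) < η s) ∧
      (∀ s, ∀ t ≠ s, q (lvl s) (S (k s) (v t)) = 0) ∧ ∀ s, ∀ t < s, p (r (v t)) (v s) = 0 := by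
  choose ρ hρ using hρ
  obtain ⟨f, hf⟩ := exists_seq_of_history (α := ℕ × eventuallyKerSubmodule q S)
    (fun s g d => p s d.2 = 0 ∧ q (lvl s) (S d.1 d.2 - tgt s) < η s ∧ ∀ t (ht : t < s),
      q (lvl s) (S d.1 (g t ht).2) = 0 ∧ p (ρ (lvl t) (g t ht).1) d.2 = 0 ∧
        p (r (g t ht).2) d.2 = 0) fun s g => by
    set b : Fin s → ℕ := fun t => ρ (lvl t) (g t t.2).1 + r (g t t.2).2
    have hb : ∀ t (ht : t < s), b ⟨t, ht⟩ ≤ s + ∑ t, b t := fun t ht =>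
      le_add_left (Finset.single_le_sum (fun _ _ => Nat.zero_le _) (Finset.mem_univ _))
    obtain ⟨κ, hκ⟩ := eventually_atTop.1 <|
      eventually_all.2 fun t : Fin s => mem_eventuallyKerSubmodule.1 (g t t.2).2.2 (lvl s)
    obtain ⟨k, hk, v, hvZ, hvN, hv⟩ := happrox (s + ∑ t, b t) (lvl s) (tgt s) (η s) (hη s) κ
    have hker : ∀ n ≤ s + ∑ t, b t, p n v = 0 := fun n hn =>
      Seminorm.eq_zero_of_le_of_eq_zero (hpm hn) hvN
    exact ⟨(k, ⟨v, hvZ⟩), hker s (Nat.le_add_right _ _), hv, fun t ht => ⟨hκ k hk ⟨t, ht⟩,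
      hker _ (le_of_add_le_left (hb t ht)), hker _ (le_of_add_le_right (hb t ht))⟩⟩
  refine ⟨fun s => (f s).1, fun s => (f s).2, fun s => (hf s).1, fun s => (hf s).2.1,
    fun s t hts => ?_, fun s t ht => ((hf s).2.2 t ht).2.2⟩
  rcases hts.lt_or_gt with h | h
  · exact ((hf s).2.2 t h).1
  · exact hρ _ _ _ ((hf t).2.2 s h).2.1

noncomputable def columnSum {E : Type*} [AddCommMonoid E] [TopologicalSpace E] (v : ℕ → E)
    (j : ℕ) : E :=
  ∑' b, v (Nat.pair j b)

section columnSum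

variable {𝕜 X : Type*} [NormedField 𝕜] [AddCommGroup X] [Module 𝕜 X] [UniformSpace X]
  [IsUniformAddGroup X] [CompleteSpace X] {p : ℕ → Seminorm 𝕜 X} {v : ℕ → X}

theorem hasSum_columnSum (hp : WithSeminorms p) (hpm : Monotone p) (hv : ∀ s, p s (v s) = 0)
    (j : ℕ) : HasSum (fun b => v (Nat.pair j b)) (columnSum v j) :=
  (hp.summable_of_apply_eq_zero hpm fun b =>
    Seminorm.eq_zero_of_le_of_eq_zero (hpm (Nat.right_le_pair j b)) (hv _)).hasSum

theorem columnSum_apply_eq_zero_of_le (hp : WithSeminorms p) (hpm : Monotone p)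
    (hv : ∀ s, p s (v s) = 0) {n m : ℕ} (h : n ≤ m) : p n (columnSum v m) = 0 :=
  (hasSum_columnSum hp hpm hv m).mem_of_isClosed
    (Seminorm.isClosed_kerSubmodule (hp.continuous_seminorm n)) fun b =>
      Seminorm.eq_zero_of_le_of_eq_zero (hpm (h.trans (Nat.left_le_pair m b))) (hv _)

end columnSum

theorem exists_triangular_dual_columnSum {𝕜 X : Type*} [NontriviallyNormedField 𝕜]
    [CompleteSpace 𝕜] [AddCommGroup X] [Module 𝕜 X] [UniformSpace X] [IsUniformAddGroup X]
    [CompleteSpace X] [ContinuousSMul 𝕜 X] {p : ℕ → Seminorm 𝕜 X} {v : ℕ → X}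
    (hp : WithSeminorms p) (hpm : Monotone p)
    (hcodim : ∀ n, FiniteDimensional 𝕜 (X ⧸ (p n).kerSubmodule)) (hv : ∀ s, p s (v s) = 0)
    {r : X → ℕ} (hr : ∀ j, p (r (v (Nat.pair j 0))) (v (Nat.pair j 0)) ≠ 0)
    (hr_ker : ∀ s, ∀ t < s, p (r (v t)) (v s) = 0) :
    ∃ ℓ : ℕ → X →L[𝕜] 𝕜, (∀ n, ℓ n (columnSum v n) = 1) ∧
      ∀ n m, n < m → ℓ n (columnSum v m) = 0 := by
  have hfun : ∀ j, ∃ ℓ : X →L[𝕜] 𝕜, ℓ (v (Nat.pair j 0)) = 1 ∧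
      ∀ x, p (r (v (Nat.pair j 0))) x = 0 → ℓ x = 0 := fun j => by
    have := hcodim (r (v (Nat.pair j 0)))
    exact Seminorm.exists_continuousLinearMap_eq_one (hp.continuous_seminorm _) (hr j)
  choose ℓ hℓv hℓker using hfun
  have hvanish : ∀ j t, Nat.pair j 0 < t → ℓ j (v t) = 0 := fun j t h => hℓker j _ (hr_ker _ _ h)
  refine ⟨ℓ, fun n => ?_, fun n m hnm => ?_⟩
  · have := (hasSum_columnSum hp hpm hv n).sub_mem_of_forall_ne (ℓ n).isClosed_ker 0
      fun b hb => hvanish n _ (Nat.pair_lt_pair_right n (Nat.pos_of_ne_zero hb))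
    rwa [LinearMap.mem_ker, map_sub, ContinuousLinearMap.coe_coe, hℓv, sub_eq_zero] at this
  · refine (hasSum_columnSum hp hpm hv m).mem_of_isClosed (ℓ n).isClosed_ker fun b =>
      hvanish n _ ((Nat.pair_lt_pair_left 0 hnm).trans_le ?_)
    exact (strictMono_nat_of_lt_succ fun b => Nat.pair_lt_pair_right m b.lt_succ_self).monotone
      (Nat.zero_le b)

theorem seminorm_comp_columnSum_eq_zero {𝕜 X Y : Type*} [NormedField 𝕜] [AddCommGroup X]
    [Module 𝕜 X] [UniformSpace X] [IsUniformAddGroup X] [CompleteSpace X] [AddCommGroup Y]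
    [Module 𝕜 Y] [TopologicalSpace Y] {p : ℕ → Seminorm 𝕜 X} (hp : WithSeminorms p)
    (hpm : Monotone p)
    {q : ℕ → Seminorm 𝕜 Y} (hq : WithSeminorms q) {S : ℕ → X →L[𝕜] Y} {k lvl : ℕ → ℕ}
    {v : ℕ → X} (hv : ∀ s, p s (v s) = 0) (hkill : ∀ s, ∀ t ≠ s, q (lvl s) (S (k s) (v t)) = 0)
    (s : ℕ) : q (lvl s) (S (k s) (columnSum v (Nat.unpair s).1 - v s)) = 0 ∧
      ∀ j ≠ (Nat.unpair s).1, q (lvl s) (S (k s) (columnSum v j)) = 0 := by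
  have hclosed := Seminorm.isClosed_kerSubmodule (p := (q (lvl s)).comp (S (k s) : X →ₗ[𝕜] Y))
    ((hq.continuous_seminorm (lvl s)).comp (S (k s)).continuous)
  refine ⟨?_, fun j hj => (hasSum_columnSum hp hpm hv j).mem_of_isClosed hclosed fun b =>
    hkill s _ fun h => hj (by rw [← h, Nat.unpair_pair])⟩
  have := (hasSum_columnSum hp hpm hv (Nat.unpair s).1).sub_mem_of_forall_ne hclosed
    (Nat.unpair s).2 fun b hb => hkill s _ fun h => hb (by rw [← h, Nat.unpair_pair])
  rwa [Nat.pair_unpair] at this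

theorem exists_approx_columnSum {𝕜 X Y : Type*} [NormedField 𝕜] [AddCommGroup X] [Module 𝕜 X]
    [UniformSpace X] [IsUniformAddGroup X] [CompleteSpace X] [AddCommGroup Y] [Module 𝕜 Y]
    [TopologicalSpace Y] {p : ℕ → Seminorm 𝕜 X} (hp : WithSeminorms p) (hpm : Monotone p)
    {q : ℕ → Seminorm 𝕜 Y} (hq : WithSeminorms q) (hqm : Monotone q) {S : ℕ → X →L[𝕜] Y}
    {k : ℕ → ℕ} {v : ℕ → X} {i₀ : ℕ} {d tgt : ℕ → Y} (hd : DenseRange d)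
    (htgt : ∀ j m R, tgt (Nat.pair j (Nat.pair m R + 1)) = d m) (hv : ∀ s, p s (v s) = 0)
    (hvtgt : ∀ s, q (s + i₀) (S (k s) (v s) - tgt s) < 1 / (s + 1))
    (hvkill : ∀ s, ∀ t ≠ s, q (s + i₀) (S (k s) (v t)) = 0) (j : ℕ) (y : Y) (i : ℕ) {ε : ℝ}
    (hε : 0 < ε) : ∃ n, q i (S n (columnSum v j) - y) < ε ∧
      ∀ m, j < m → q i (S n (columnSum v m)) = 0 := by
  obtain ⟨_, ⟨m, rfl⟩, hm⟩ := (hq.dense_iff_of_monotone hqm).1 hd y i (ε / 2) (half_pos hε)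
  obtain ⟨R, hR⟩ := exists_nat_one_div_lt (half_pos hε)
  set s := Nat.pair j (Nat.pair m (max R i) + 1)
  have hs : max R i ≤ s :=
    (Nat.right_le_pair _ _).trans ((Nat.le_succ _).trans (Nat.right_le_pair _ _))
  obtain ⟨hxs, hxkill⟩ := seminorm_comp_columnSum_eq_zero hp hpm hq hv hvkill s
  rw [show (Nat.unpair s).1 = j by simp [s]] at hxs hxkill
  have hle : q i ≤ q (s + i₀) := hqm (by omega)
  refine ⟨k s, ?_, fun m' hm' => Seminorm.eq_zero_of_le_of_eq_zero hle (hxkill m' hm'.ne')⟩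
  have hs' : 1 / ((s : ℝ) + 1) ≤ 1 / (R + 1) := one_div_le_one_div_of_le (by positivity)
    (by exact_mod_cast Nat.succ_le_succ (le_of_max_le_left hs))
  have hsplit : S (k s) (columnSum v j) - y =
      S (k s) (columnSum v j - v s) + (S (k s) (v s) - tgt s) + (d m - y) := by
    rw [map_sub, htgt]; abel
  calc q i (S (k s) (columnSum v j) - y)
      ≤ q i (S (k s) (columnSum v j - v s)) + q i (S (k s) (v s) - tgt s) + q i (d m - y) := by
        rw [hsplit]; exact (map_add_le_add _ _ _).trans (add_le_add_left (map_add_le_add _ _ _) _)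
    _ ≤ q (s + i₀) (S (k s) (columnSum v j - v s)) + q (s + i₀) (S (k s) (v s) - tgt s) +
        q i (d m - y) := by gcongr <;> exact hle _
    _ < 0 + 1 / (R + 1) + ε / 2 := by
        rw [hxs]; gcongr; exact (hvtgt s).trans_le hs'
    _ < ε := by linarith

theorem exists_triangular_hypercyclic_seq {𝕜 X Y : Type*} [NontriviallyNormedField 𝕜]
    [CompleteSpace 𝕜] [AddCommGroup X] [Module 𝕜 X] [UniformSpace X] [IsUniformAddGroup X]
    [CompleteSpace X] [ContinuousSMul 𝕜 X] [T2Space X] [AddCommGroup Y] [Module 𝕜 Y]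
    [TopologicalSpace Y] [TopologicalSpace.SeparableSpace Y] {p : ℕ → Seminorm 𝕜 X}
    (hp : WithSeminorms p) (hpm : Monotone p)
    (hcodim : ∀ n, FiniteDimensional 𝕜 (X ⧸ (p n).kerSubmodule)) {q : ℕ → Seminorm 𝕜 Y}
    (hq : WithSeminorms q) (hqm : Monotone q) {S : ℕ → X →L[𝕜] Y}
    (happrox : ∀ N i y, ∀ ε > 0, ∀ κ, ∃ k ≥ κ, ∃ v ∈ eventuallyKerSubmodule q S,
      p N v = 0 ∧ q i (S k v - y) < ε)
    {i₀ : ℕ} {y₀ : Y} (hy₀ : q i₀ y₀ ≠ 0) :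
    ∃ (x : ℕ → X) (ℓ : ℕ → X →L[𝕜] 𝕜), (∀ n, ℓ n (x n) = 1) ∧ (∀ n m, n < m → ℓ n (x m) = 0) ∧
      (∀ n m, n ≤ m → p n (x m) = 0) ∧
      ∀ j y i, ∀ ε > 0, ∃ k, q i (S k (x j) - y) < ε ∧ ∀ m, j < m → q i (S k (x m)) = 0 := by
  have : Nonempty Y := ⟨0⟩
  obtain ⟨d, hd⟩ := TopologicalSpace.exists_dense_seq Y
  have hδ : 0 < q i₀ y₀ := (apply_nonneg _ _).lt_of_ne' hy₀
  -- Stage `⟨j, 0⟩` aims at `y₀`, forcing `v ⟨j, 0⟩ ≠ 0`; stage `⟨j, ⟨m, R⟩ + 1⟩` aims at `d m`.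
  set tgt : ℕ → Y := fun s =>
    if (Nat.unpair s).2 = 0 then y₀ else d (Nat.unpair ((Nat.unpair s).2 - 1)).1 with htgt
  have hsep : ∀ x : X, ∃ n, x ≠ 0 → p n x ≠ 0 := fun x => (em (x = 0)).elim
    (fun h => ⟨0, absurd h⟩) fun h => (hp.separating_of_T1 x h).imp fun _ hn _ => hn
  choose r hr using hsep
  obtain ⟨k, v, hv, hvtgt, hvkill, hvr⟩ := exists_stage_seq hpm
    (fun i k => hp.exists_eq_zero_of_continuous hpm (g := (q i).comp (S k : X →ₗ[𝕜] Y))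
      ((hq.continuous_seminorm i).comp (S k).continuous)) happrox
    (fun s => s + i₀) tgt (fun s => min (1 / (s + 1)) (q i₀ y₀ / 2))
    (fun s => lt_min (by positivity) (half_pos hδ)) r
  have hhead : ∀ j, v (Nat.pair j 0) ≠ 0 := by
    intro j h0
    have h := (hvtgt (Nat.pair j 0)).trans_le (min_le_right _ _)
    simp only [htgt, Nat.unpair_pair, if_true, h0, map_zero, zero_sub, map_neg_eq_map] at h
    linarith [hqm (Nat.le_add_left i₀ (Nat.pair j 0)) y₀]
  obtain ⟨ℓ, hself, hlt⟩ :=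
    exists_triangular_dual_columnSum hp hpm hcodim hv (fun j => hr _ (hhead j)) hvr
  exact ⟨columnSum v, ℓ, hself, hlt, fun n m h => columnSum_apply_eq_zero_of_le hp hpm hv h,
    fun j y i ε hε => exists_approx_columnSum hp hpm hq hqm hd (fun j m R => by simp [htgt]) hv
      (fun s => (hvtgt s).trans_le (min_le_left _ _)) hvkill j y i hε⟩

def IsHypercyclicSubspace {𝕜 X Y F : Type*} [Semiring 𝕜] [AddCommMonoid X] [Module 𝕜 X]
    [TopologicalSpace X] [TopologicalSpace Y] [FunLike F X Y] (T : ℕ → F)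
    (M : Submodule 𝕜 X) : Prop :=
  IsClosed (M : Set X) ∧ ¬ Module.Finite 𝕜 M ∧ ∀ x ∈ M, x ≠ 0 → Dense (Set.range fun n => T n x)

theorem IsHypercyclicSubspace.of_comp {𝕜 X Y F : Type*} [Semiring 𝕜] [AddCommMonoid X]
    [Module 𝕜 X] [TopologicalSpace X] [TopologicalSpace Y] [FunLike F X Y] {T : ℕ → F}
    {M : Submodule 𝕜 X} (φ : ℕ → ℕ)
    (h : IsHypercyclicSubspace (fun k => T (φ k)) M) : IsHypercyclicSubspace T M :=
  ⟨h.1, h.2.1, fun x hx hx0 => (h.2.2 x hx hx0).mono (Set.range_comp_subset_range φ _)⟩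

theorem isHypercyclicSubspace_top_of_seminorm_eq_zero {𝕜 X Y F : Type*} [NormedField 𝕜]
    [AddCommGroup X] [Module 𝕜 X] [TopologicalSpace X] [AddCommGroup Y] [Module 𝕜 Y]
    [TopologicalSpace Y] [FunLike F X Y] {q : ℕ → Seminorm 𝕜 Y}
    (hq : WithSeminorms q) (hq₀ : ∀ i y, q i y = 0) (hX : ¬ Module.Finite 𝕜 X) (T : ℕ → F) :
    IsHypercyclicSubspace T (⊤ : Submodule 𝕜 X) := by
  refine ⟨by simp, fun h => hX (Module.Finite.equiv Submodule.topEquiv), fun x _ _ => ?_⟩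
  rw [hq.dense_iff_of_monotone fun i j _ y => (hq₀ i y).trans_le (apply_nonneg _ _)]
  exact fun y i ε hε => ⟨T 0 x, ⟨0, rfl⟩, by rwa [hq₀]⟩

theorem isHypercyclicSubspace_closedTailSpan {𝕜 X Y : Type*} [NontriviallyNormedField 𝕜]
    [AddCommGroup X] [Module 𝕜 X] [TopologicalSpace X] [IsTopologicalAddGroup X]
    [ContinuousSMul 𝕜 X] [T2Space X] [AddCommGroup Y] [Module 𝕜 Y] [TopologicalSpace Y]
    {p : ℕ → Seminorm 𝕜 X} (hp : WithSeminorms p) {q : ℕ → Seminorm 𝕜 Y} (hq : WithSeminorms q)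
    (hqm : Monotone q) {S : ℕ → X →L[𝕜] Y} {x : ℕ → X} (ℓ : ℕ → X →L[𝕜] 𝕜)
    (hself : ∀ n, ℓ n (x n) = 1) (hlt : ∀ n m, n < m → ℓ n (x m) = 0)
    (hker : ∀ n m, n ≤ m → p n (x m) = 0)
    (happrox : ∀ j y i, ∀ ε > 0, ∃ k, q i (S k (x j) - y) < ε ∧ ∀ m, j < m → q i (S k (x m)) = 0) :
    IsHypercyclicSubspace S (closedTailSpan 𝕜 x 0) := by
  refine ⟨Submodule.isClosed_topologicalClosure _, fun hfin => ?_, fun z hz hz0 => ?_⟩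
  · exact Module.Finite.not_linearIndependent_of_infinite (R := 𝕜)
      (fun n => (⟨x n, mem_closedTailSpan (Nat.zero_le n)⟩ : closedTailSpan 𝕜 x 0))
      (LinearIndependent.of_comp (closedTailSpan 𝕜 x 0).subtype
        (linearIndependent_of_triangular (fun n => (ℓ n : X →ₗ[𝕜] 𝕜)) hself hlt))
  obtain ⟨n, hn⟩ := hp.separating_of_T1 z hz0
  have hzn : z ∉ closedTailSpan 𝕜 x n := fun h => hn <|
    closedTailSpan_le (Seminorm.isClosed_kerSubmodule (hp.continuous_seminorm n)) (hker n) h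
  obtain ⟨j, a, ha, w, hw, rfl⟩ :=
    exists_eq_smul_add_of_mem_closedTailSpan ℓ hself hlt hz ⟨n, hzn⟩
  refine hq.dense_range_smul_add hqm (fun y i ε hε => ?_) ha hw
  obtain ⟨k, hk, hkill⟩ := happrox j y i ε hε
  exact ⟨k, hk, fun w hw => closedTailSpan_le (Seminorm.isClosed_kerSubmodule
    (p := (q i).comp (S k : X →ₗ[𝕜] Y)) ((hq.continuous_seminorm i).comp (S k).continuous))
    hkill hw⟩

theorem hypercyclic_subspace_criterion_finite_codim_kernels_general {𝕜 X Y : Type*} [RCLike 𝕜]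
    [AddCommGroup X] [Module 𝕜 X] [UniformSpace X] [IsUniformAddGroup X]
    [ContinuousSMul 𝕜 X] [CompleteSpace X] [T2Space X]
    [AddCommGroup Y] [Module 𝕜 Y] [TopologicalSpace Y]
    [TopologicalSpace.SeparableSpace Y]
    (p : ℕ → Seminorm 𝕜 X) (hp : WithSeminorms p) (hpm : ∀ n, p n ≤ p (n + 1))
    (hXinf : ¬ Module.Finite 𝕜 X)
    (hcodim : ∀ n, Module.Finite 𝕜 (X ⧸ (p n).kerSubmodule))
    (q : ℕ → Seminorm 𝕜 Y) (hq : WithSeminorms q) (hqm : ∀ j, q j ≤ q (j + 1))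
    (T : ℕ → X →L[𝕜] Y)
    (nk : ℕ → ℕ) (X0 : Set X)
    (h1 : ∀ j : ℕ, ∀ x ∈ X0, ∀ᶠ k in Filter.atTop, q j (T (nk k) x) = 0)
    (h2 : ∀ K : ℕ, Dense (⋃ k ≥ K, T (nk k) '' X0)) :
    ∃ M : Submodule 𝕜 X, IsClosed (M : Set X) ∧ ¬ Module.Finite 𝕜 M ∧
      ∀ x ∈ M, x ≠ 0 → Dense (Set.range fun n => T n x) := by
  have hpm' : Monotone p := monotone_nat_of_le_succ hpm
  have hqm' : Monotone q := monotone_nat_of_le_succ hqm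
  by_cases hq₀ : ∀ i y, q i y = 0
  · exact ⟨⊤, isHypercyclicSubspace_top_of_seminorm_eq_zero hq hq₀ hXinf T⟩
  push Not at hq₀
  obtain ⟨i₀, y₀, hy₀⟩ := hq₀
  have hker_approx : ∀ N i y, ∀ ε > 0, ∀ κ, ∃ k ≥ κ,
      ∃ v ∈ eventuallyKerSubmodule q (fun k => T (nk k)), p N v = 0 ∧ q i (T (nk k) v - y) < ε :=
    fun N i y ε hε κ =>
      have := hcodim N
      exists_approx_mem_eventuallyKerSubmodule hq hqm' h1 h2 (p N) i y hε κ
  obtain ⟨x, ℓ, hself, hlt, hker, happrox⟩ :=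
    exists_triangular_hypercyclic_seq hp hpm' hcodim hq hqm' hker_approx hy₀
  exact ⟨_, (isHypercyclicSubspace_closedTailSpan hp hq hqm' ℓ hself hlt hker happrox).of_comp nk⟩

/-- Criterion for hypercyclic subspaces when every seminorm of `X` has a kernel of finite
codimension: if `(T n)` satisfies the two conditions below along `(n k)`, then `(T n)`
possesses a hypercyclic subspace. -/
theorem hypercyclic_subspace_criterion_finite_codim_kernels {𝕜 X Y : Type*} [RCLike 𝕜]
    [AddCommGroup X] [Module 𝕜 X] [UniformSpace X] [IsUniformAddGroup X]
    [ContinuousSMul 𝕜 X] [CompleteSpace X] [T2Space X]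
    [AddCommGroup Y] [Module 𝕜 Y] [TopologicalSpace Y] [IsTopologicalAddGroup Y]
    [ContinuousSMul 𝕜 Y] [TopologicalSpace.SeparableSpace Y]
    (p : ℕ → Seminorm 𝕜 X) (hp : WithSeminorms p) (hpm : ∀ n, p n ≤ p (n + 1))
    (hXinf : ¬ Module.Finite 𝕜 X)
    (hcodim : ∀ n, Module.Finite 𝕜 (X ⧸ (p n).kerSubmodule))
    (q : ℕ → Seminorm 𝕜 Y) (hq : WithSeminorms q) (hqm : ∀ j, q j ≤ q (j + 1))
    (T : ℕ → X →L[𝕜] Y)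
    (nk : ℕ → ℕ) (hnk : StrictMono nk) (X0 : Set X)
    (h1 : ∀ j : ℕ, ∀ x ∈ X0, ∀ᶠ k in Filter.atTop, q j (T (nk k) x) = 0)
    (h2 : ∀ K : ℕ, Dense (⋃ k ≥ K, T (nk k) '' X0)) :
    ∃ M : Submodule 𝕜 X, IsClosed (M : Set X) ∧ ¬ Module.Finite 𝕜 M ∧
      ∀ x ∈ M, x ≠ 0 → Dense (Set.range fun n => T n x) :=
  hypercyclic_subspace_criterion_finite_codim_kernels_general p hp hpm hXinf hcodim q hq hqm T nk X0
    h1 h2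
end
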